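/- arXiv:1203.2846 — 2 statements merged into one kernel-verified Lean document; each statement's English description precedes it below -/
import Mathlib

section
/- The dynamic programming operator S is min-plus additive: for every finite nonempty index set I and every family of functions V_i : ℝⁿ → ℝ (i ∈ I), each bounded below, the pointwise minimum min_{i∈I} V_i is bounded below and S(min_{i∈I} V_i)(x) = min_{i∈I} (S V_i)(x) for all x ∈ ℝⁿ. -/
/-!
For fixed `x`, `S W x = ⨅ w, W (A x + B w) + c w`, where the stage cost `c` is bounded below
because `Q` is positive semidefinite. Adding `c w` commutes with a finite minimum, and an
infimum commutes with a finite minimum as long as every family involved is bounded below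
(otherwise `⨅` on `ℝ` takes its junk value).
-/

open Matrix

noncomputable section

/-- The dynamic programming operator
`(S V)(x) := inf_{w} [ V(A(x) + B w) + ½‖w‖²_Q + ½‖y − C(x)‖²_R ]`. -/
def dpOp {n p l : ℕ} (A : (Fin n → ℝ) → (Fin n → ℝ)) (B : Matrix (Fin n) (Fin p) ℝ)
    (C : (Fin n → ℝ) → (Fin l → ℝ)) (Q : Matrix (Fin p) (Fin p) ℝ)
    (R : Matrix (Fin l) (Fin l) ℝ) (y : Fin l → ℝ)
    (V : (Fin n → ℝ) → ℝ) (x : Fin n → ℝ) : ℝ :=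
  sInf {c : ℝ | ∃ w : Fin p → ℝ,
    c = V (A x + B.mulVec w) + (1 / 2) * (w ⬝ᵥ Q.mulVec w)
        + (1 / 2) * ((y - C x) ⬝ᵥ R.mulVec (y - C x))}

open Set

section
variable {ι α β : Type*} [Finite ι] [Nonempty ι] [ConditionallyCompleteLinearOrder β]

theorem bddBelow_range_ciInf {g : ι → α → β} (hg : ∀ i, BddBelow (range (g i))) :
    BddBelow (range fun a => ⨅ i, g i a) := by
  choose b hb using hg
  obtain ⟨j₀, hj₀⟩ := Finite.exists_min b
  refine ⟨b j₀, ?_⟩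
  rintro _ ⟨a, rfl⟩
  obtain ⟨j, hj⟩ := exists_eq_ciInf_of_finite (f := fun i => g i a)
  exact (hj₀ j).trans ((hb j ⟨a, rfl⟩).trans_eq hj)

theorem ciInf_comm_of_finite {g : ι → α → β} (hg : ∀ i, BddBelow (range (g i))) :
    ⨅ a, ⨅ i, g i a = ⨅ i, ⨅ a, g i a := by
  rcases isEmpty_or_nonempty α with _ | _
  · simp only [iInf_of_isEmpty, ciInf_const]
  refine le_antisymm (le_ciInf fun i => le_ciInf fun a => ?_) (le_ciInf fun a => ?_)
  · exact ciInf_le_of_le (bddBelow_range_ciInf hg) a (ciInf_le (finite_range _).bddBelow i)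
  · obtain ⟨j, hj⟩ := exists_eq_ciInf_of_finite (f := fun i => g i a)
    exact hj ▸ ciInf_le_of_le (finite_range _).bddBelow j (ciInf_le (hg j) a)

theorem ciInf_ciInf_add_comm_of_finite [AddGroup β] [AddLeftMono β] [AddRightMono β]
    {f : ι → α → β} {c : α → β} (hf : ∀ i, BddBelow (range (f i))) (hc : BddBelow (range c)) :
    ⨅ a, ((⨅ i, f i a) + c a) = ⨅ i, ⨅ a, (f i a + c a) := by
  have hfc : ∀ a, (⨅ i, f i a) + c a = ⨅ i, (f i a + c a) := fun a =>
    (OrderIso.addRight (c a)).map_ciInf (finite_range _).bddBelow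
  simp only [hfc]
  exact ciInf_comm_of_finite fun i => (hf i).range_add hc

end

theorem Matrix.PosSemidef.bddBelow_range_half_dotProduct_mulVec_add {p : Type*} [Fintype p]
    {Q : Matrix p p ℝ} (hQ : Q.PosSemidef) (r : ℝ) :
    BddBelow (range fun w : p → ℝ => (1 / 2) * (w ⬝ᵥ Q *ᵥ w) + r) :=
  ⟨r, by rintro _ ⟨w, rfl⟩; simpa using hQ.dotProduct_mulVec_nonneg w⟩

theorem dpOp_eq_iInf {n p l : ℕ} (A : (Fin n → ℝ) → (Fin n → ℝ)) (B : Matrix (Fin n) (Fin p) ℝ)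
    (C : (Fin n → ℝ) → (Fin l → ℝ)) (Q : Matrix (Fin p) (Fin p) ℝ)
    (R : Matrix (Fin l) (Fin l) ℝ) (y : Fin l → ℝ) (V : (Fin n → ℝ) → ℝ) (x : Fin n → ℝ) :
    dpOp A B C Q R y V x = ⨅ w, V (A x + B *ᵥ w)
      + ((1 / 2) * (w ⬝ᵥ Q *ᵥ w) + (1 / 2) * ((y - C x) ⬝ᵥ R *ᵥ (y - C x))) := by
  rw [dpOp, iInf]
  congr 1
  ext c
  exact exists_congr fun w => by rw [eq_comm, add_assoc]

theorem dpOp_minPlus_additive_general {n p l : ℕ}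
    (A : (Fin n → ℝ) → (Fin n → ℝ)) (B : Matrix (Fin n) (Fin p) ℝ)
    (C : (Fin n → ℝ) → (Fin l → ℝ))
    (Q : Matrix (Fin p) (Fin p) ℝ) (R : Matrix (Fin l) (Fin l) ℝ)
    (hQ : Q.PosDef) (y : Fin l → ℝ)
    (I : Type) [Fintype I] [Nonempty I]
    (V : I → (Fin n → ℝ) → ℝ) (hV : ∀ i, BddBelow (Set.range (V i))) :
    BddBelow (Set.range fun x : Fin n → ℝ => ⨅ i, V i x) ∧
    ∀ x : Fin n → ℝ,
      dpOp A B C Q R y (fun z => ⨅ i, V i z) x = ⨅ i, dpOp A B C Q R y (V i) x := by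
  refine ⟨bddBelow_range_ciInf hV, fun x => ?_⟩
  simp only [dpOp_eq_iInf]
  exact ciInf_ciInf_add_comm_of_finite (fun i => (hV i).mono (range_comp_subset_range _ _))
    (hQ.posSemidef.bddBelow_range_half_dotProduct_mulVec_add _)

/-- The dynamic programming operator is min-plus additive: for a finite nonempty family
of functions `V i`, each bounded below, the pointwise minimum is bounded below and
`S(min_i V_i) = min_i S(V_i)` pointwise. -/
theorem dpOp_minPlus_additive {n p l : ℕ} (hn : 1 ≤ n) (hp : 1 ≤ p) (hl : 1 ≤ l)
    (A : (Fin n → ℝ) → (Fin n → ℝ)) (B : Matrix (Fin n) (Fin p) ℝ)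
    (C : (Fin n → ℝ) → (Fin l → ℝ))
    (Q : Matrix (Fin p) (Fin p) ℝ) (R : Matrix (Fin l) (Fin l) ℝ)
    (hQ : Q.PosDef) (hR : R.PosDef) (y : Fin l → ℝ)
    (I : Type) [Fintype I] [Nonempty I]
    (V : I → (Fin n → ℝ) → ℝ) (hV : ∀ i, BddBelow (Set.range (V i))) :
    BddBelow (Set.range fun x : Fin n → ℝ => ⨅ i, V i x) ∧
    ∀ x : Fin n → ℝ,
      dpOp A B C Q R y (fun z => ⨅ i, V i z) x = ⨅ i, dpOp A B C Q R y (V i) x :=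
  dpOp_minPlus_additive_general A B C Q R hQ y I V hV

end
end

section
/- The min-plus disturbance-propagation step preserves the min-of-quadratics structure: let I be a finite nonempty index set and let V : ℝⁿ → ℝ satisfy V(z) = min_{i ∈ I} ( ½ zᵀ N_i z + ℓ_iᵀ z + c_i ) for all z, where each N_i is an n×n real symmetric positive semidefinite matrix, ℓ_i ∈ ℝⁿ, c_i ∈ ℝ. Let Q be a p×p real symmetric positive definite matrix and B an n×p real matrix. Then for every a ∈ ℝⁿ, inf_{w ∈ ℝᵖ} [ V(a + B w) + ½ wᵀ Q w ] = min_{i ∈ I} ( ½ aᵀ h_i a + ℓ̃_iᵀ a + c̃_i ), where h_i := N_i − N_i B (Q + Bᵀ N_i B)⁻¹ Bᵀ N_i, ℓ̃_i := ℓ_i − N_i B (Q + Bᵀ N_i B)⁻¹ Bᵀ ℓ_i, and c̃_i := c_i − ½ ℓ_iᵀ B (Q + Bᵀ N_i B)⁻¹ Bᵀ ℓ_i; moreover each h_i is symmetric positive semidefinite. -/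
/-!
Completing the square in `w` gives, for a single quadratic `q(z) = ½ zᵀ N z + ℓᵀ z + c`,
`q(a + B w) + ½ wᵀ Q w = q̃(a) + ½ (w - w⋆)ᵀ (Q + Bᵀ N B) (w - w⋆)`, where `q̃` is the quadratic
with data `h, ℓ̃, c̃` and `w⋆ = -(Q + Bᵀ N B)⁻¹ Bᵀ (N a + ℓ)`. As `Q + Bᵀ N B` is positive
definite, `q̃(a)` is the least value of the left-hand side over `w`, attained at `w⋆`. A finite
minimum of branches commutes with an infimum over `w` as soon as each branch attains its
infimum. For `ℓ = 0`, `c = 0` the least value is `½ aᵀ h a`, a minimum of nonnegative numbers,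
so `h` is positive semidefinite.
-/

open Matrix

noncomputable section

namespace Matrix

variable {α m : Type*} [CommSemiring α] [Fintype m] {S : Matrix m m α}

lemma IsSymm.dotProduct_mulVec_comm (hS : S.IsSymm) (x y : m → α) :
    x ⬝ᵥ S *ᵥ y = y ⬝ᵥ S *ᵥ x := by
  rw [← dotProduct_transpose_mulVec, hS.eq]

lemma IsSymm.mulVec_dotProduct (hS : S.IsSymm) (x y : m → α) : S *ᵥ x ⬝ᵥ y = x ⬝ᵥ S *ᵥ y := by
  rw [dotProduct_comm, hS.dotProduct_mulVec_comm]

lemma IsSymm.transpose_mul_mul {k : Type*} [Fintype k] (hS : S.IsSymm) (B : Matrix m k α) :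
    (Bᵀ * S * B).IsSymm := by
  simp only [IsSymm, transpose_mul, transpose_transpose, hS.eq, Matrix.mul_assoc]

lemma transpose_mulVec_dotProduct_mulVec_transpose_mulVec {k : Type*} [Fintype k]
    (B : Matrix m k α) (K : Matrix k k α) (x y : m → α) :
    Bᵀ *ᵥ x ⬝ᵥ K *ᵥ (Bᵀ *ᵥ y) = x ⬝ᵥ (B * K * Bᵀ) *ᵥ y := by
  rw [dotProduct_comm, dotProduct_transpose_mulVec, mulVec_mulVec, mulVec_mulVec]

end Matrix

lemma isLeast_range_iInf {ι W α : Type*} [Finite ι] [Nonempty ι]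
    [ConditionallyCompleteLinearOrder α] {F : ι → W → α} {g : ι → α}
    (hF : ∀ i, IsLeast (Set.range (F i)) (g i)) :
    IsLeast (Set.range fun w => ⨅ i, F i w) (⨅ i, g i) := by
  have hle : ∀ w, ⨅ i, g i ≤ ⨅ i, F i w := fun w =>
    le_ciInf fun i => (ciInf_le (Set.finite_range g).bddBelow i).trans ((hF i).2 ⟨w, rfl⟩)
  obtain ⟨j, hj⟩ := Finite.exists_min g
  obtain ⟨w, hw⟩ := (hF j).1
  refine ⟨⟨w, le_antisymm ?_ (hle w)⟩, by rintro _ ⟨w, rfl⟩; exact hle w⟩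
  calc ⨅ i, F i w ≤ F j w := ciInf_le (Set.finite_range _).bddBelow j
    _ = g j := hw
    _ ≤ ⨅ i, g i := le_ciInf hj

variable {m k : Type*} [Fintype m] [Fintype k]

def quadratic (N : Matrix m m ℝ) (ℓ : m → ℝ) (c : ℝ) (z : m → ℝ) : ℝ :=
  1 / 2 * (z ⬝ᵥ N *ᵥ z) + ℓ ⬝ᵥ z + c

lemma half_dotProduct_mulVec_add_dotProduct [DecidableEq k] {M : Matrix k k ℝ} (hM : M.IsSymm)
    (hdet : IsUnit M.det) (b w : k → ℝ) :
    1 / 2 * (w ⬝ᵥ M *ᵥ w) + b ⬝ᵥ w =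
      1 / 2 * ((w + M⁻¹ *ᵥ b) ⬝ᵥ M *ᵥ (w + M⁻¹ *ᵥ b)) - 1 / 2 * (b ⬝ᵥ M⁻¹ *ᵥ b) := by
  have hb : M *ᵥ (M⁻¹ *ᵥ b) = b := by rw [mulVec_mulVec, mul_nonsing_inv M hdet, one_mulVec]
  have hcross : M⁻¹ *ᵥ b ⬝ᵥ M *ᵥ w = w ⬝ᵥ b := by rw [hM.dotProduct_mulVec_comm, hb]
  simp only [mulVec_add, dotProduct_add, add_dotProduct, hb, hcross,
    dotProduct_comm (M⁻¹ *ᵥ b) b, dotProduct_comm b w]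
  ring

lemma quadratic_add_mulVec {N : Matrix m m ℝ} (hN : N.IsSymm) (ℓ : m → ℝ) (c : ℝ)
    (B : Matrix m k ℝ) (a : m → ℝ) (w : k → ℝ) :
    quadratic N ℓ c (a + B *ᵥ w) =
      quadratic N ℓ c a + (1 / 2 * (w ⬝ᵥ (Bᵀ * N * B) *ᵥ w) + Bᵀ *ᵥ (N *ᵥ a + ℓ) ⬝ᵥ w) := by
  have hcross : B *ᵥ w ⬝ᵥ N *ᵥ a = Bᵀ *ᵥ (N *ᵥ a) ⬝ᵥ w := by
    rw [dotProduct_comm, ← dotProduct_transpose_mulVec, dotProduct_comm]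
  have hquad : B *ᵥ w ⬝ᵥ N *ᵥ (B *ᵥ w) = w ⬝ᵥ (Bᵀ * N * B) *ᵥ w := by
    rw [← mulVec_mulVec, ← mulVec_mulVec, dotProduct_transpose_mulVec, dotProduct_comm]
  have hlin : ℓ ⬝ᵥ B *ᵥ w = Bᵀ *ᵥ ℓ ⬝ᵥ w := by
    rw [← dotProduct_transpose_mulVec, dotProduct_comm]
  simp only [quadratic, mulVec_add, dotProduct_add, add_dotProduct, hcross, hquad, hlin,
    hN.dotProduct_mulVec_comm a (B *ᵥ w)]
  ring

lemma quadratic_sub_half_dotProduct_mulVec {N : Matrix m m ℝ} {K : Matrix k k ℝ} (hN : N.IsSymm)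
    (hK : K.IsSymm) (ℓ : m → ℝ) (c : ℝ) (B : Matrix m k ℝ) (a : m → ℝ) :
    quadratic N ℓ c a - 1 / 2 * (Bᵀ *ᵥ (N *ᵥ a + ℓ) ⬝ᵥ K *ᵥ (Bᵀ *ᵥ (N *ᵥ a + ℓ))) =
      quadratic (N - N * B * K * Bᵀ * N) (ℓ - (N * B * K * Bᵀ) *ᵥ ℓ)
        (c - 1 / 2 * (ℓ ⬝ᵥ (B * K * Bᵀ) *ᵥ ℓ)) a := by
  have hP : (B * K * Bᵀ).IsSymm := by simpa using hK.transpose_mul_mul Bᵀ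
  have hquad : N *ᵥ a ⬝ᵥ (B * K * Bᵀ) *ᵥ (N *ᵥ a) = a ⬝ᵥ (N * B * K * Bᵀ * N) *ᵥ a := by
    rw [hN.mulVec_dotProduct, mulVec_mulVec, mulVec_mulVec]
    simp only [Matrix.mul_assoc]
  have hcross : N *ᵥ a ⬝ᵥ (B * K * Bᵀ) *ᵥ ℓ = (N * B * K * Bᵀ) *ᵥ ℓ ⬝ᵥ a := by
    rw [hN.mulVec_dotProduct, mulVec_mulVec, dotProduct_comm]
    simp only [Matrix.mul_assoc]
  simp only [quadratic, transpose_mulVec_dotProduct_mulVec_transpose_mulVec, mulVec_add,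
    dotProduct_add, add_dotProduct, sub_mulVec, dotProduct_sub, sub_dotProduct, hquad, hcross,
    hP.dotProduct_mulVec_comm ℓ (N *ᵥ a)]
  ring

lemma posDef_add_transpose_mul_mul {N : Matrix m m ℝ} {Q : Matrix k k ℝ} (hN : N.PosSemidef)
    (hQ : Q.PosDef) (B : Matrix m k ℝ) : (Q + Bᵀ * N * B).PosDef := by
  simpa [conjTranspose_eq_transpose_of_trivial] using
    hQ.add_posSemidef (hN.conjTranspose_mul_mul_same B)

variable [DecidableEq k]

def propagatedHessian (N : Matrix m m ℝ) (Q : Matrix k k ℝ) (B : Matrix m k ℝ) : Matrix m m ℝ :=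
  N - N * B * (Q + Bᵀ * N * B)⁻¹ * Bᵀ * N

def propagatedQuadratic (N : Matrix m m ℝ) (ℓ : m → ℝ) (c : ℝ) (Q : Matrix k k ℝ)
    (B : Matrix m k ℝ) : (m → ℝ) → ℝ :=
  quadratic (propagatedHessian N Q B) (ℓ - (N * B * (Q + Bᵀ * N * B)⁻¹ * Bᵀ) *ᵥ ℓ)
    (c - 1 / 2 * (ℓ ⬝ᵥ (B * (Q + Bᵀ * N * B)⁻¹ * Bᵀ) *ᵥ ℓ))

def propagationMinimizer (N : Matrix m m ℝ) (ℓ : m → ℝ) (Q : Matrix k k ℝ) (B : Matrix m k ℝ)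
    (a : m → ℝ) : k → ℝ :=
  -((Q + Bᵀ * N * B)⁻¹ *ᵥ (Bᵀ *ᵥ (N *ᵥ a + ℓ)))

lemma quadratic_add_mulVec_add_half_dotProduct_mulVec {N : Matrix m m ℝ} {Q : Matrix k k ℝ}
    (hN : N.IsSymm) (hQ : Q.IsSymm) (ℓ : m → ℝ) (c : ℝ) (B : Matrix m k ℝ)
    (hdet : IsUnit (Q + Bᵀ * N * B).det) (a : m → ℝ) (w : k → ℝ) :
    quadratic N ℓ c (a + B *ᵥ w) + 1 / 2 * (w ⬝ᵥ Q *ᵥ w) =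
      propagatedQuadratic N ℓ c Q B a +
        1 / 2 * ((w - propagationMinimizer N ℓ Q B a) ⬝ᵥ (Q + Bᵀ * N * B) *ᵥ
          (w - propagationMinimizer N ℓ Q B a)) := by
  have hM : (Q + Bᵀ * N * B).IsSymm := hQ.add (hN.transpose_mul_mul B)
  set b := Bᵀ *ᵥ (N *ᵥ a + ℓ)
  calc quadratic N ℓ c (a + B *ᵥ w) + 1 / 2 * (w ⬝ᵥ Q *ᵥ w)
      = quadratic N ℓ c a + (1 / 2 * (w ⬝ᵥ (Q + Bᵀ * N * B) *ᵥ w) + b ⬝ᵥ w) := by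
        rw [quadratic_add_mulVec hN, add_mulVec, dotProduct_add]; ring
    _ = quadratic N ℓ c a - 1 / 2 * (b ⬝ᵥ (Q + Bᵀ * N * B)⁻¹ *ᵥ b) +
          1 / 2 * ((w + (Q + Bᵀ * N * B)⁻¹ *ᵥ b) ⬝ᵥ (Q + Bᵀ * N * B) *ᵥ
            (w + (Q + Bᵀ * N * B)⁻¹ *ᵥ b)) := by
        rw [half_dotProduct_mulVec_add_dotProduct hM hdet]; ring
    _ = _ := by
        rw [quadratic_sub_half_dotProduct_mulVec hN hM.inv, propagationMinimizer, sub_neg_eq_add]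
        rfl

lemma isLeast_propagatedQuadratic {N : Matrix m m ℝ} {Q : Matrix k k ℝ} (hN : N.PosSemidef)
    (hQ : Q.PosDef) (ℓ : m → ℝ) (c : ℝ) (B : Matrix m k ℝ) (a : m → ℝ) :
    IsLeast (Set.range fun w => quadratic N ℓ c (a + B *ᵥ w) + 1 / 2 * (w ⬝ᵥ Q *ᵥ w))
      (propagatedQuadratic N ℓ c Q B a) := by
  have hM := posDef_add_transpose_mul_mul hN hQ B
  have key := quadratic_add_mulVec_add_half_dotProduct_mulVec
    (isHermitian_iff_isSymm.mp hN.isHermitian) (isHermitian_iff_isSymm.mp hQ.isHermitian) ℓ c B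
    hM.det_pos.ne'.isUnit a
  refine ⟨⟨propagationMinimizer N ℓ Q B a, by dsimp only; rw [key]; simp⟩, ?_⟩
  rintro _ ⟨w, rfl⟩
  have hsq := hM.posSemidef.dotProduct_mulVec_nonneg (w - propagationMinimizer N ℓ Q B a)
  rw [star_trivial] at hsq
  dsimp only
  rw [key]
  linarith

lemma posSemidef_propagatedHessian {N : Matrix m m ℝ} {Q : Matrix k k ℝ} (hN : N.PosSemidef)
    (hQ : Q.PosDef) (B : Matrix m k ℝ) : (propagatedHessian N Q B).PosSemidef := by
  have hNs := isHermitian_iff_isSymm.mp hN.isHermitian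
  have hKs : (Q + Bᵀ * N * B)⁻¹.IsSymm :=
    (isHermitian_iff_isSymm.mp (posDef_add_transpose_mul_mul hN hQ B).isHermitian).inv
  refine posSemidef_iff_dotProduct_mulVec.mpr ⟨?_, fun x => ?_⟩
  · refine isHermitian_iff_isSymm.mpr (hNs.sub ?_)
    simpa [Matrix.mul_assoc, hNs.eq] using (hKs.transpose_mul_mul Bᵀ).transpose_mul_mul N
  · obtain ⟨w, hw⟩ := (isLeast_propagatedQuadratic hN hQ 0 0 B x).1
    have h1 := hN.dotProduct_mulVec_nonneg (x + B *ᵥ w)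
    have h2 := hQ.posSemidef.dotProduct_mulVec_nonneg w
    simp only [propagatedQuadratic, quadratic, star_trivial, mulVec_zero, sub_zero,
      zero_dotProduct, dotProduct_zero, mul_zero, add_zero] at hw h1 h2 ⊢
    linarith

/-- The min-plus disturbance-propagation step preserves the min-of-quadratics
structure: if `V(z) = min_i (½ zᵀ N_i z + ℓ_iᵀ z + c_i)` with each `N_i` symmetric
positive semidefinite and `Q` symmetric positive definite, then for every `a`,
`inf_w [V(a + B w) + ½ wᵀ Q w] = min_i (½ aᵀ h_i a + ℓ̃_iᵀ a + c̃_i)` with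
`h_i = N_i − N_i B (Q + Bᵀ N_i B)⁻¹ Bᵀ N_i`,
`ℓ̃_i = ℓ_i − N_i B (Q + Bᵀ N_i B)⁻¹ Bᵀ ℓ_i`,
`c̃_i = c_i − ½ ℓ_iᵀ B (Q + Bᵀ N_i B)⁻¹ Bᵀ ℓ_i`; moreover each `h_i` is symmetric
positive semidefinite. -/
theorem minPlus_propagation_preserves_minQuadratics {n p : ℕ}
    (I : Type) [Fintype I] [Nonempty I]
    (N : I → Matrix (Fin n) (Fin n) ℝ) (hN : ∀ i, (N i).PosSemidef)
    (ell : I → Fin n → ℝ) (c : I → ℝ)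
    (V : (Fin n → ℝ) → ℝ)
    (hV : ∀ z, V z = ⨅ i, ((1 / 2) * (z ⬝ᵥ (N i).mulVec z) + ell i ⬝ᵥ z + c i))
    (Q : Matrix (Fin p) (Fin p) ℝ) (hQ : Q.PosDef)
    (B : Matrix (Fin n) (Fin p) ℝ) :
    (∀ a : Fin n → ℝ,
      sInf {r : ℝ | ∃ w : Fin p → ℝ,
          r = V (a + B.mulVec w) + (1 / 2) * (w ⬝ᵥ Q.mulVec w)} =
        ⨅ i, ((1 / 2) *
              (a ⬝ᵥ (N i - N i * B * (Q + Bᵀ * N i * B)⁻¹ * Bᵀ * N i).mulVec a)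
            + (ell i - (N i * B * (Q + Bᵀ * N i * B)⁻¹ * Bᵀ).mulVec (ell i)) ⬝ᵥ a
            + (c i - (1 / 2) *
                (ell i ⬝ᵥ (B * (Q + Bᵀ * N i * B)⁻¹ * Bᵀ).mulVec (ell i))))) ∧
    ∀ i, (N i - N i * B * (Q + Bᵀ * N i * B)⁻¹ * Bᵀ * N i).PosSemidef := by
  refine ⟨fun a => ?_, fun i => posSemidef_propagatedHessian (hN i) hQ B⟩
  have hcost : ∀ w, V (a + B *ᵥ w) + 1 / 2 * (w ⬝ᵥ Q *ᵥ w) =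
      ⨅ i, (quadratic (N i) (ell i) (c i) (a + B *ᵥ w) + 1 / 2 * (w ⬝ᵥ Q *ᵥ w)) := fun w => by
    rw [hV, ciInf_add (Set.finite_range _).bddBelow]
    rfl
  have hset : {r : ℝ | ∃ w : Fin p → ℝ, r = V (a + B *ᵥ w) + 1 / 2 * (w ⬝ᵥ Q *ᵥ w)} =
      Set.range fun w => ⨅ i,
        (quadratic (N i) (ell i) (c i) (a + B *ᵥ w) + 1 / 2 * (w ⬝ᵥ Q *ᵥ w)) := by
    ext r
    simp only [Set.mem_ofPred_eq, Set.mem_range, hcost, eq_comm]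
  rw [hset]
  exact (isLeast_range_iInf fun i =>
    isLeast_propagatedQuadratic (hN i) hQ (ell i) (c i) B a).csInf_eq

end
end
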